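/- arXiv:0811.2825 — 7 statements merged into one kernel-verified Lean document; each statement's English description precedes it below -/
import Mathlib

section
/- Fix an integer N ≥ 1 and g ∈ ℝ, and let F̃ : ℝᴺ → ℝ be any differentiable function. On the domain { (T₁,T₃,…,T_{2N+1}) ∈ ℝ^{N+1} : T_{2N+1} < 0 }, define for 1 ≤ k ≤ N the variables χ_k = ((2N−2k+1)!!/(2N+1)!!) · (−2·T_{2N−2k+1}) · (−2·T_{2N+1})^{−(2N−2k+1)/(2N+1)}, and set F(T₁,…,T_{2N+1}) = −(g²/(8(2N+1)))·log(−T_{2N+1}) + F̃(χ₁,…,χ_N). Then F satisfies the reduced L₀ Virasoro constraint: Σ_{k=0}^{N} (2k+1)·T_{2k+1}·∂F/∂T_{2k+1} + g²/8 = 0. -/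
open Real Finset

/-- The general solution of the reduced `L₀` Virasoro constraint of the Kontsevich
model with times `T₁, T₃, …, T_{2N+1}` (the `i`-th coordinate of `T : Fin (N+1) → ℝ`
is the time `T_{2i+1}`).  Here `F̃` is an arbitrary function of the `N` scaling-invariant
variables
`χ_k = ((2N−2k+1)!!/(2N+1)!!) · (−2·T_{2N−2k+1}) · (−2·T_{2N+1})^{−(2N−2k+1)/(2N+1)}`
for `1 ≤ k ≤ N` (the coordinate `j : Fin N` corresponds to `k = j+1`, so that
`2N−2k+1 = 2(N−1−j)+1`). -/
noncomputable def kontsevichL0Solution (N : ℕ) (g : ℝ) (Ftilde : (Fin N → ℝ) → ℝ)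
    (T : Fin (N + 1) → ℝ) : ℝ :=
  -(g ^ 2 / (8 * (2 * (N : ℝ) + 1))) * Real.log (-(T (Fin.last N))) +
    Ftilde (fun j : Fin N =>
      ((Nat.doubleFactorial (2 * (N - 1 - (j : ℕ)) + 1) : ℝ) /
          (Nat.doubleFactorial (2 * N + 1) : ℝ)) *
        (-2 * T ⟨N - 1 - (j : ℕ), by omega⟩) *
        (-2 * T (Fin.last N)) ^
          (-(((2 * (N - 1 - (j : ℕ)) + 1 : ℕ) : ℝ)) / (2 * (N : ℝ) + 1)))

/-! The rescaling `T_{2k+1} ↦ e^{(2k+1)t} T_{2k+1}` leaves every `χ_k` unchanged and shifts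
`log(-T_{2N+1})` by `(2N+1)t`, so `F` decreases by exactly `(g²/8)t` along it. Differentiating at
`t = 0` gives the constraint, whose left-hand side is the derivative of `F` along the generator
of the rescaling. -/

section WeightedScale

variable {ι : Type*} (w : ι → ℝ)

noncomputable def weightedScale (t : ℝ) (T : ι → ℝ) : ι → ℝ := fun k => exp (w k * t) * T k

@[simp]
theorem weightedScale_zero (T : ι → ℝ) : weightedScale w 0 T = T := by
  funext k
  simp [weightedScale]

theorem hasDerivAt_weightedScale [Fintype ι] (T : ι → ℝ) :
    HasDerivAt (fun t => weightedScale w t T) (fun k => w k * T k) 0 := by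
  refine hasDerivAt_pi.2 fun k => ?_
  simpa [weightedScale] using (((hasDerivAt_id (0 : ℝ)).const_mul (w k)).exp).mul_const (T k)

theorem sum_mul_fderiv_single_eq_of_weightedScale [Fintype ι] [DecidableEq ι]
    {F : (ι → ℝ) → ℝ} {T : ι → ℝ} {c : ℝ} (hF : DifferentiableAt ℝ F T)
    (hscale : ∀ t, F (weightedScale w t T) = F T + c * t) :
    ∑ k, w k * T k * fderiv ℝ F T (Pi.single k 1) = c := by
  have hF' : HasFDerivAt F (fderiv ℝ F T) (weightedScale w 0 T) := by
    rw [weightedScale_zero]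
    exact hF.hasFDerivAt
  have hcurve : HasDerivAt (fun t => F (weightedScale w t T))
      (fderiv ℝ F T fun k => w k * T k) 0 :=
    hF'.comp_hasDerivAt 0 (hasDerivAt_weightedScale w T)
  have hline : HasDerivAt (fun t => F T + c * t) c 0 := by
    simpa using ((hasDerivAt_id (0 : ℝ)).const_mul c).const_add (F T)
  have hderiv : fderiv ℝ F T (fun k => w k * T k) = c := by
    simp only [hscale] at hcurve
    exact hcurve.unique hline
  rw [← hderiv, ← Finset.univ_sum_single fun k => w k * T k, map_sum]
  refine Finset.sum_congr rfl fun k _ => ?_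
  rw [← smul_eq_mul, ← map_smul, ← Pi.single_smul, smul_eq_mul, mul_one]

end WeightedScale

noncomputable def kontsevichChi (N : ℕ) (T : Fin (N + 1) → ℝ) (j : Fin N) : ℝ :=
  ((Nat.doubleFactorial (2 * (N - 1 - (j : ℕ)) + 1) : ℝ) /
      (Nat.doubleFactorial (2 * N + 1) : ℝ)) *
    (-2 * T ⟨N - 1 - (j : ℕ), by omega⟩) *
    (-2 * T (Fin.last N)) ^
      (-(((2 * (N - 1 - (j : ℕ)) + 1 : ℕ) : ℝ)) / (2 * (N : ℝ) + 1))

section Kontsevich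

variable {N : ℕ} (g : ℝ) (Ftilde : (Fin N → ℝ) → ℝ)

theorem kontsevichL0Solution_eq (T : Fin (N + 1) → ℝ) :
    kontsevichL0Solution N g Ftilde T =
      -(g ^ 2 / (8 * (2 * (N : ℝ) + 1))) * log (-(T (Fin.last N))) +
        Ftilde (kontsevichChi N T) :=
  rfl

theorem mul_exp_mul_mul_exp_mul_rpow_neg_div {a m c x y t : ℝ} (hc : c ≠ 0) (hy : 0 ≤ y) :
    a * (exp (m * t) * x) * (exp (c * t) * y) ^ (-m / c) = a * x * y ^ (-m / c) := by
  have hexp : exp (m * t) * exp (c * t) ^ (-m / c) = 1 := by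
    rw [← exp_mul, ← exp_add]
    field_simp
    simp
  rw [mul_rpow (exp_nonneg _) hy]
  linear_combination a * x * y ^ (-m / c) * hexp

theorem kontsevichChi_weightedScale {T : Fin (N + 1) → ℝ} (hT : T (Fin.last N) ≤ 0) (t : ℝ) :
    kontsevichChi N (weightedScale (fun k : Fin (N + 1) => 2 * (k : ℝ) + 1) t T) =
      kontsevichChi N T := by
  funext j
  simp only [kontsevichChi, weightedScale, Fin.val_last, mul_left_comm (-2 : ℝ) (exp _)]
  push_cast
  exact mul_exp_mul_mul_exp_mul_rpow_neg_div (by positivity) (by linarith)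

theorem kontsevichL0Solution_weightedScale {T : Fin (N + 1) → ℝ} (hT : T (Fin.last N) < 0)
    (t : ℝ) :
    kontsevichL0Solution N g Ftilde (weightedScale (fun k : Fin (N + 1) => 2 * (k : ℝ) + 1) t T) =
      kontsevichL0Solution N g Ftilde T + -(g ^ 2 / 8) * t := by
  have hlog : log (-(weightedScale (fun k : Fin (N + 1) => 2 * (k : ℝ) + 1) t T (Fin.last N))) =
      (2 * N + 1) * t + log (-(T (Fin.last N))) := by
    simp only [weightedScale, Fin.val_last, ← mul_neg]
    rw [log_mul (exp_ne_zero _) (by linarith), log_exp]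
  rw [kontsevichL0Solution_eq, kontsevichL0Solution_eq, kontsevichChi_weightedScale hT.le, hlog]
  field_simp
  ring

theorem differentiableAt_kontsevichL0Solution {T : Fin (N + 1) → ℝ}
    (hFtilde : DifferentiableAt ℝ Ftilde (kontsevichChi N T)) (hT : T (Fin.last N) < 0) :
    DifferentiableAt ℝ (kontsevichL0Solution N g Ftilde) T := by
  have hchi : DifferentiableAt ℝ (kontsevichChi N) T := by
    unfold kontsevichChi
    fun_prop (disch := linarith)
  rw [funext (kontsevichL0Solution_eq g Ftilde)]
  fun_prop (disch := linarith)

end Kontsevich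

theorem kontsevichL0Solution_satisfies_L0_general (N : ℕ) (g : ℝ)
    (Ftilde : (Fin N → ℝ) → ℝ) (hFtilde : Differentiable ℝ Ftilde)
    (T : Fin (N + 1) → ℝ) (hT : T (Fin.last N) < 0) :
    ∑ k : Fin (N + 1), (2 * (k : ℝ) + 1) * T k *
        fderiv ℝ (kontsevichL0Solution N g Ftilde) T (Pi.single k 1) +
      g ^ 2 / 8 = 0 := by
  rw [sum_mul_fderiv_single_eq_of_weightedScale _
    (differentiableAt_kontsevichL0Solution g Ftilde hFtilde.differentiableAt hT)
    (kontsevichL0Solution_weightedScale g Ftilde hT)]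
  ring

/-- Every function of the above form (with `F̃` an arbitrary differentiable function)
satisfies the reduced `L₀` Virasoro constraint
`Σ_{k=0}^{N} (2k+1)·T_{2k+1}·∂F/∂T_{2k+1} + g²/8 = 0` on the domain `T_{2N+1} < 0`. -/
theorem kontsevichL0Solution_satisfies_L0 (N : ℕ) (hN : 1 ≤ N) (g : ℝ)
    (Ftilde : (Fin N → ℝ) → ℝ) (hFtilde : Differentiable ℝ Ftilde)
    (T : Fin (N + 1) → ℝ) (hT : T (Fin.last N) < 0) :
    ∑ k : Fin (N + 1), (2 * (k : ℝ) + 1) * T k *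
        fderiv ℝ (kontsevichL0Solution N g Ftilde) T (Pi.single k 1) +
      g ^ 2 / 8 = 0 :=
  kontsevichL0Solution_satisfies_L0_general N g Ftilde hFtilde T hT
end

section
/- Fix an integer N ≥ 1. For χ = (χ₁,…,χ_N) ∈ ℝᴺ put χ(z) = Σ_{k=1}^{N} χ_k z^k, and for 1 ≤ i ≤ N define η_i(χ) to be the coefficient of z^i in the formal power series −log(1+χ(z)) = Σ_{p≥1} ((−1)^p/p)·χ(z)^p (each η_i is a polynomial in χ₁,…,χ_N). Then, with the convention χ₀ = 1, for every 1 ≤ i ≤ N one has the identity Σ_{k=0}^{N−1} χ_k · ∂η_i/∂χ_{k+1} = −δ_{i,1}, i.e. the vector field ∂/∂χ₁ + Σ_{k=1}^{N−1} χ_k ∂/∂χ_{k+1} maps to −∂/∂η₁ under the change of variables χ ↦ η. -/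
/-! The derivative of `η_i` along `v` is the `z^i`-coefficient of `-χ_v(z)/(1+χ(z))`, where
`χ_v` is the generating polynomial of `v`; since `χ(z)` has no constant term this is the
`z^i`-coefficient of `-χ_v · Σ_{q<i} (-χ)^q`. For the vector field in question
`χ_v = z(1+χ(z))` modulo `z^{N+1}`, and `(1+χ) Σ_{q<i} (-χ)^q = 1 - (-χ)^i`, so the coefficient
is that of `z^{i-1}` in `-(1 - (-χ)^i)`, namely `-δ_{i,1}`. -/

open Finset Polynomial

/-- The generating polynomial `χ(z) = Σ_{k=1}^{N} χ_k z^k` (the coordinate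
`j : Fin N` of `χ` is the variable `χ_{j+1}`). -/
noncomputable def chiPoly (N : ℕ) (χ : Fin N → ℝ) : Polynomial ℝ :=
  ∑ k : Fin N, Polynomial.C (χ k) * Polynomial.X ^ ((k : ℕ) + 1)

/-- `η_i(χ)` is the coefficient of `z^i` in the formal power series
`−log(1+χ(z)) = Σ_{p≥1} ((−1)^p/p)·χ(z)^p`.  Since `χ(z)` has no constant term,
only the powers `1 ≤ p ≤ i` contribute to the coefficient of `z^i`, so the sum
may be truncated at `p = i`. -/
noncomputable def etaVar (N : ℕ) (i : ℕ) (χ : Fin N → ℝ) : ℝ :=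
  ∑ p ∈ Finset.Icc 1 i, ((-1 : ℝ) ^ p / p) * ((chiPoly N χ) ^ p).coeff i

theorem ContinuousLinearMap.sum_mul_apply_single {ι : Type*} [Fintype ι] [DecidableEq ι]
    (f : (ι → ℝ) →L[ℝ] ℝ) (w : ι → ℝ) : ∑ k, w k * f (Pi.single k 1) = f w := by
  conv_rhs => rw [← univ_sum_single w]
  rw [map_sum]
  refine sum_congr rfl fun k _ => ?_
  rw [← smul_eq_mul, ← map_smul, ← Pi.single_smul', smul_eq_mul, mul_one]

namespace Polynomial

section CoeffFDeriv

variable {E : Type*} [NormedAddCommGroup E] [NormedSpace ℝ E]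

/-- `ℝ[X]` carries no norm, so the derivative of a polynomial-valued map is taken
coefficientwise: `F' v` is the derivative of `F` at `x` along `v`. -/
def HasCoeffFDerivAt (F F' : E → ℝ[X]) (x : E) : Prop :=
  ∀ n, ∃ D : E →L[ℝ] ℝ, HasFDerivAt (fun y => (F y).coeff n) D x ∧ ∀ v, D v = (F' v).coeff n

theorem HasCoeffFDerivAt.congr_deriv {F F' G' : E → ℝ[X]} {x : E} (hF : HasCoeffFDerivAt F F' x)
    (h : ∀ v, F' v = G' v) : HasCoeffFDerivAt F G' x := by
  simpa only [HasCoeffFDerivAt, h] using hF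

theorem hasCoeffFDerivAt_const (P : ℝ[X]) (x : E) :
    HasCoeffFDerivAt (fun _ => P) (fun _ => 0) x :=
  fun _ => ⟨0, hasFDerivAt_const _ x, fun _ => by simp⟩

theorem hasCoeffFDerivAt_linearMap [FiniteDimensional ℝ E] (L : E →ₗ[ℝ] ℝ[X]) (x : E) :
    HasCoeffFDerivAt L L x :=
  fun n => ⟨((lcoeff ℝ n).comp L).toContinuousLinearMap,
    ((lcoeff ℝ n).comp L).toContinuousLinearMap.hasFDerivAt, fun _ => rfl⟩

theorem HasCoeffFDerivAt.mul {F F' G G' : E → ℝ[X]} {x : E} (hF : HasCoeffFDerivAt F F' x)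
    (hG : HasCoeffFDerivAt G G' x) :
    HasCoeffFDerivAt (fun y => F y * G y) (fun v => F' v * G x + F x * G' v) x := by
  intro n
  choose DF hDF hDF' using hF
  choose DG hDG hDG' using hG
  refine ⟨∑ ab ∈ antidiagonal n, ((F x).coeff ab.1 • DG ab.2 + (G x).coeff ab.2 • DF ab.1), ?_, ?_⟩
  · simp only [coeff_mul]
    exact HasFDerivAt.fun_sum fun ab _ => (hDF ab.1).mul (hDG ab.2)
  · intro v
    simp [coeff_mul, hDF', hDG', sum_add_distrib, mul_comm, add_comm]

theorem HasCoeffFDerivAt.pow {F F' : E → ℝ[X]} {x : E} (hF : HasCoeffFDerivAt F F' x) (p : ℕ) :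
    HasCoeffFDerivAt (fun y => F y ^ p) (fun v => p * F' v * F x ^ (p - 1)) x := by
  induction p with
  | zero => simpa using hasCoeffFDerivAt_const (1 : ℝ[X]) x
  | succ p ih =>
    simp only [pow_succ]
    refine (ih.mul hF).congr_deriv fun v => ?_
    rcases p with _ | p
    · simp
    · simp only [add_tsub_cancel_right, Nat.cast_add, Nat.cast_one, pow_succ]
      ring

end CoeffFDeriv

/-- Truncation of `z (1 + c) / (1 + c) = z` at order `i`. -/
theorem coeff_X_mul_one_add_mul_geom_sum {R : Type*} [CommRing R] {c : R[X]} (hc : X ∣ c)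
    {i : ℕ} (hi : 1 ≤ i) :
    (X * ((1 + c) * ∑ q ∈ range i, (-c) ^ q)).coeff i = if i = 1 then 1 else 0 := by
  obtain ⟨n, rfl⟩ : ∃ n, i = n + 1 := ⟨i - 1, by omega⟩
  have hgeom : (1 + c) * ∑ q ∈ range (n + 1), (-c) ^ q = 1 - (-c) ^ (n + 1) := by
    simpa using mul_neg_geom_sum (-c) (n + 1)
  have hvanish : ((-c) ^ (n + 1)).coeff n = 0 :=
    X_pow_dvd_iff.mp (pow_dvd_pow_of_dvd (dvd_neg.mpr hc) (n + 1)) n n.lt_succ_self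
  simp [hgeom, coeff_X_mul, hvanish, coeff_one]

end Polynomial

noncomputable def chiPolyLinearMap (N : ℕ) : (Fin N → ℝ) →ₗ[ℝ] ℝ[X] :=
  ∑ k : Fin N, (LinearMap.proj k).smulRight (X ^ ((k : ℕ) + 1))

theorem chiPolyLinearMap_apply (N : ℕ) (χ : Fin N → ℝ) :
    chiPolyLinearMap N χ = chiPoly N χ := by
  simp [chiPolyLinearMap, chiPoly, C_mul']

theorem chiPoly_coeff_zero (N : ℕ) (χ : Fin N → ℝ) : (chiPoly N χ).coeff 0 = 0 := by
  simp [chiPoly, coeff_X_pow]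

theorem chiPoly_coeff_succ (N : ℕ) (χ : Fin N → ℝ) (k : Fin N) :
    (chiPoly N χ).coeff ((k : ℕ) + 1) = χ k := by
  simp [chiPoly, coeff_X_pow, Fin.val_inj]

theorem X_dvd_chiPoly (N : ℕ) (χ : Fin N → ℝ) : X ∣ chiPoly N χ :=
  X_dvd_iff.mpr (chiPoly_coeff_zero N χ)

theorem X_pow_dvd_chiPoly_shift_sub (N : ℕ) (χ : Fin N → ℝ) :
    X ^ (N + 1) ∣ chiPoly N (fun k : Fin N => if (k : ℕ) = 0 then (1 : ℝ)
        else χ ⟨(k : ℕ) - 1, lt_of_le_of_lt (Nat.sub_le _ _) k.isLt⟩) - X * (1 + chiPoly N χ) := by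
  refine X_pow_dvd_iff.mpr fun d hd => ?_
  rcases d with _ | m
  · simp [chiPoly_coeff_zero]
  · rw [coeff_sub, coeff_X_mul, chiPoly_coeff_succ N _ ⟨m, by omega⟩]
    rcases m with _ | m
    · simp [chiPoly_coeff_zero]
    · simp [coeff_one, chiPoly_coeff_succ N χ ⟨m, by omega⟩]

theorem hasFDerivAt_etaVar (N i : ℕ) (χ : Fin N → ℝ) :
    ∃ D : (Fin N → ℝ) →L[ℝ] ℝ, HasFDerivAt (etaVar N i) D χ ∧
      ∀ v, D v = -(chiPoly N v * ∑ q ∈ range i, (-chiPoly N χ) ^ q).coeff i := by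
  have hpow (p : ℕ) : HasCoeffFDerivAt (fun y => chiPoly N y ^ p)
      (fun v => p * chiPoly N v * chiPoly N χ ^ (p - 1)) χ := by
    simpa only [chiPolyLinearMap_apply] using
      (hasCoeffFDerivAt_linearMap (chiPolyLinearMap N) χ).pow p
  choose D hD hD' using fun p => hpow p i
  refine ⟨∑ p ∈ Icc 1 i, ((-1 : ℝ) ^ p / p) • D p,
    HasFDerivAt.fun_sum fun p _ => (hD p).const_mul _, fun v => ?_⟩
  have hreindex (f : ℕ → ℝ) : ∑ p ∈ Icc 1 i, f p = ∑ q ∈ range i, f (q + 1) := by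
    rw [range_eq_Ico, sum_Ico_add' f, Ico_add_one_right_eq_Icc]
  simp only [_root_.sum_apply, _root_.smul_apply, hD', smul_eq_mul, hreindex, mul_sum,
    finsetSum_coeff, ← sum_neg_distrib]
  refine sum_congr rfl fun q _ => ?_
  have hneg : (-chiPoly N χ) ^ q = C ((-1 : ℝ) ^ q) * chiPoly N χ ^ q := by rw [neg_pow]; simp
  rw [hneg, mul_left_comm, coeff_C_mul, add_tsub_cancel_right, mul_assoc, coeff_natCast_mul]
  field_simp
  ring

theorem chi_vector_field_maps_to_eta₁_general (N : ℕ)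
    (i : ℕ) (hi₁ : 1 ≤ i) (hiN : i ≤ N) (χ : Fin N → ℝ) :
    ∑ k : Fin N,
        (if (k : ℕ) = 0 then (1 : ℝ)
          else χ ⟨(k : ℕ) - 1, lt_of_le_of_lt (Nat.sub_le _ _) k.isLt⟩) *
          fderiv ℝ (etaVar N i) χ (Pi.single k 1)
      = -(if i = 1 then (1 : ℝ) else 0) := by
  obtain ⟨D, hD, hD'⟩ := hasFDerivAt_etaVar N i χ
  obtain ⟨R, hR⟩ := X_pow_dvd_chiPoly_shift_sub N χ
  rw [hD.fderiv, ContinuousLinearMap.sum_mul_apply_single, hD', sub_eq_iff_eq_add.mp hR, add_mul,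
    coeff_add, mul_assoc, mul_assoc, coeff_X_pow_mul', if_neg (by omega), zero_add,
    coeff_X_mul_one_add_mul_geom_sum (X_dvd_chiPoly N χ) hi₁]

/-- With the convention `χ₀ = 1`, for every `1 ≤ i ≤ N` one has
`Σ_{k=0}^{N−1} χ_k · ∂η_i/∂χ_{k+1} = −δ_{i,1}`, i.e. the vector field
`∂/∂χ₁ + Σ_{k=1}^{N−1} χ_k ∂/∂χ_{k+1}` maps to `−∂/∂η₁` under the change of
variables `χ ↦ η`.  (The coordinate `k : Fin N` represents the variable
`χ_{k+1}`, so `∂/∂χ_{k+1}` is the derivative along `Pi.single k 1` and the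
coefficient `χ_k` is `1` for `k = 0` and the `(k−1)`-th coordinate otherwise.) -/
theorem chi_vector_field_maps_to_eta₁ (N : ℕ) (hN : 1 ≤ N)
    (i : ℕ) (hi₁ : 1 ≤ i) (hiN : i ≤ N) (χ : Fin N → ℝ) :
    ∑ k : Fin N,
        (if (k : ℕ) = 0 then (1 : ℝ)
          else χ ⟨(k : ℕ) - 1, lt_of_le_of_lt (Nat.sub_le _ _) k.isLt⟩) *
          fderiv ℝ (etaVar N i) χ (Pi.single k 1)
      = -(if i = 1 then (1 : ℝ) else 0) :=
  chi_vector_field_maps_to_eta₁_general N i hi₁ hiN χ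
end

section
/- Let s ∈ ℝ and z ∈ ℝ with z > s and z > 0. Then the limit as w → z of the expression (z + w − 2s)/((z − w)²·√(z−s)·√(w−s)) − (z + w)/(√(z·w)·(z − w)²) exists and equals s·(2z − s)/(4·z²·(z − s)²). -/
/-!
Writing `a = √(z-s)`, `b = √(w-s)`, `c = √(zw)`, the expression is
`((z+w-2s)c - (z+w)ab) / ((z-w)² abc)`. Multiplying the numerator by its conjugate
`(z+w-2s)c + (z+w)ab` gives `(z+w-2s)² zw - (z+w)² (z-s)(w-s) = (z-w)² s(z+w-s)`,
so the double pole cancels and the expression agrees off the diagonal with a function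
continuous at `w = z`, whose value there is the limit.
-/

open Real Filter Topology

theorem resolvent_numerator_mul_conj {K : Type*} [CommRing K] {s z w a b c : K}
    (ha : a ^ 2 = z - s) (hb : b ^ 2 = w - s) (hc : c ^ 2 = z * w) :
    ((z + w - 2 * s) * c - (z + w) * (a * b)) * ((z + w - 2 * s) * c + (z + w) * (a * b)) =
      (z - w) ^ 2 * (s * (z + w - s)) := by
  linear_combination
    (z + w - 2 * s) ^ 2 * hc - (z + w) ^ 2 * b ^ 2 * ha - (z + w) ^ 2 * (z - s) * hb

theorem resolvent_sub_eq_div_conj {K : Type*} [Field K] {s z w a b c : K}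
    (ha : a ^ 2 = z - s) (hb : b ^ 2 = w - s) (hc : c ^ 2 = z * w) (hzw : z ≠ w)
    (habc : a * b * c ≠ 0) (hconj : (z + w - 2 * s) * c + (z + w) * (a * b) ≠ 0) :
    (z + w - 2 * s) / ((z - w) ^ 2 * a * b) - (z + w) / (c * (z - w) ^ 2) =
      s * (z + w - s) / (a * b * c * ((z + w - 2 * s) * c + (z + w) * (a * b))) := by
  have hzw2 : (z - w) ^ 2 ≠ 0 := pow_ne_zero 2 (sub_ne_zero.2 hzw)
  obtain ⟨ha0, hb0, hc0⟩ : a ≠ 0 ∧ b ≠ 0 ∧ c ≠ 0 := by simpa [and_assoc] using habc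
  rw [div_sub_div _ _ (by simp [*]) (by simp [*]), div_eq_div_iff (by simp [*]) (by simp [*])]
  linear_combination ((z - w) ^ 2 * a * b * c) * resolvent_numerator_mul_conj ha hb hc

noncomputable def twoPointResolventRegular (s z w : ℝ) : ℝ :=
  s * (z + w - s) / (√(z - s) * √(w - s) * √(z * w) *
    ((z + w - 2 * s) * √(z * w) + (z + w) * (√(z - s) * √(w - s))))

theorem twoPointResolvent_eq_regular {s z w : ℝ} (hzs : s < z) (hsw : s < w) (hz : 0 < z)
    (hw : 0 < w) (hzw : z ≠ w) :
    (z + w - 2 * s) / ((z - w) ^ 2 * √(z - s) * √(w - s)) - (z + w) / (√(z * w) * (z - w) ^ 2) =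
      twoPointResolventRegular s z w := by
  have hzs' : 0 < z - s := sub_pos.2 hzs
  have hsw' : 0 < w - s := sub_pos.2 hsw
  have hzw2s : 0 < z + w - 2 * s := by linarith
  exact resolvent_sub_eq_div_conj (sq_sqrt hzs'.le) (sq_sqrt hsw'.le)
    (sq_sqrt (by positivity)) hzw (by positivity) (ne_of_gt (by positivity))

theorem twoPointResolventRegular_denom_self {s z : ℝ} (hzs : s < z) (hz : 0 < z) :
    √(z - s) * √(z - s) * √(z * z) *
      ((z + z - 2 * s) * √(z * z) + (z + z) * (√(z - s) * √(z - s))) =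
      4 * z ^ 2 * (z - s) ^ 2 := by
  rw [sqrt_mul_self hz.le, mul_self_sqrt (sub_nonneg.2 hzs.le)]
  ring

theorem twoPointResolventRegular_self {s z : ℝ} (hzs : s < z) (hz : 0 < z) :
    twoPointResolventRegular s z z = s * (2 * z - s) / (4 * z ^ 2 * (z - s) ^ 2) := by
  rw [twoPointResolventRegular, twoPointResolventRegular_denom_self hzs hz]
  ring

theorem continuousAt_twoPointResolventRegular {s z : ℝ} (hzs : s < z) (hz : 0 < z) :
    ContinuousAt (twoPointResolventRegular s z) z := by
  have hzs' : 0 < z - s := sub_pos.2 hzs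
  refine ContinuousAt.div (by fun_prop) (by fun_prop) ?_
  rw [twoPointResolventRegular_denom_self hzs hz]
  positivity

/-- The two double poles at `z₁ = z₂` of the genus-zero two-point resolvent of
the Gaussian Kontsevich model cancel on the diagonal: as `w → z` (with `z > s`,
`z > 0`), the expression
`(z + w − 2s)/((z − w)²·√(z−s)·√(w−s)) − (z + w)/(√(z·w)·(z − w)²)`
has a finite limit, equal to `s·(2z − s)/(4·z²·(z − s)²)`. -/
theorem gaussian_two_point_resolvent_diagonal_limit (s z : ℝ) (hzs : s < z) (hz : 0 < z) :
    Tendsto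
      (fun w : ℝ =>
        (z + w - 2 * s) / ((z - w) ^ 2 * Real.sqrt (z - s) * Real.sqrt (w - s)) -
          (z + w) / (Real.sqrt (z * w) * (z - w) ^ 2))
      (𝓝[≠] z)
      (𝓝 (s * (2 * z - s) / (4 * z ^ 2 * (z - s) ^ 2))) := by
  have hregular : Tendsto (twoPointResolventRegular s z) (𝓝[≠] z)
      (𝓝 (s * (2 * z - s) / (4 * z ^ 2 * (z - s) ^ 2))) := by
    rw [← twoPointResolventRegular_self hzs hz]
    exact (continuousAt_twoPointResolventRegular hzs hz).tendsto.mono_left nhdsWithin_le_nhds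
  refine hregular.congr' ?_
  filter_upwards [nhdsWithin_le_nhds (eventually_gt_nhds hzs),
    nhdsWithin_le_nhds (eventually_gt_nhds hz), self_mem_nhdsWithin] with w hsw hw hwz
  exact (twoPointResolvent_eq_regular hzs hsw hz hw (Ne.symm hwz)).symm
end

section
/- For every integer k ≥ 3 and all reals z₁, …, z_k > 0, ∫_{(0,∞)^k} (x₁ + ⋯ + x_k)^{k−3} · (∏_{i=1}^k √x_i) · e^{−Σ_{i=1}^k x_i z_i} dx₁⋯dx_k = (π^{k/2}/2^k) · [ (d/ds)^{k−3} ∏_{i=1}^k (z_i − s)^{−3/2} ] evaluated at s = 0. -/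
/-!
Since `∂ₛ e^{-∑ xᵢ (zᵢ - s)} = (∑ xᵢ) e^{-∑ xᵢ (zᵢ - s)}`, every factor `∑ xᵢ` of the integrand is
a derivative in a common shift `s` of all the `zᵢ`. Differentiating under the integral sign,
with the domination `T^j e^{-εT} ≤ j! / ε^j` paid for by half of the exponential decay, reduces
the identity to the case without the factor `(∑ xᵢ)^{k-3}`. That integral splits into
one-dimensional Gamma integrals `∫₀^∞ √t e^{-at} dt = Γ(3/2) a^{-3/2} = (√π / 2) a^{-3/2}`.
-/

open Real MeasureTheory Finset Set Filter Topology

namespace GaussianKontsevich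

theorem integral_sqrt_mul_exp_neg_mul_Ioi {a : ℝ} (ha : 0 < a) :
    ∫ t in Ioi 0, √t * exp (-(a * t)) = √π / 2 * a ^ (-(3 : ℝ) / 2) := by
  have hΓ : Gamma (3 / 2) = √π / 2 := by
    rw [show (3 : ℝ) / 2 = 1 / 2 + 1 by norm_num, Gamma_add_one (by norm_num), Gamma_one_half_eq]
    ring
  calc ∫ t in Ioi 0, √t * exp (-(a * t))
      = ∫ t in Ioi 0, t ^ ((3 : ℝ) / 2 - 1) * exp (-(a * t)) := by
        refine setIntegral_congr_fun measurableSet_Ioi fun t _ => ?_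
        rw [sqrt_eq_rpow]; norm_num
    _ = √π / 2 * a ^ (-(3 : ℝ) / 2) := by
        rw [integral_rpow_mul_exp_neg_mul_Ioi (by norm_num) ha, hΓ, one_div,
          inv_rpow ha.le, ← rpow_neg ha.le, mul_comm]
        ring_nf

theorem integrableOn_sqrt_mul_exp_neg_mul_Ioi {a : ℝ} (ha : 0 < a) :
    IntegrableOn (fun t => √t * exp (-(a * t))) (Ioi 0) :=
  .of_integral_ne_zero <| by
    rw [integral_sqrt_mul_exp_neg_mul_Ioi ha]
    positivity

theorem pow_mul_exp_neg_mul_le {T ε : ℝ} (hT : 0 ≤ T) (hε : 0 < ε) (j : ℕ) :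
    T ^ j * exp (-(ε * T)) ≤ j.factorial / ε ^ j := by
  have h := pow_div_factorial_le_exp _ (mul_nonneg hε.le hT) j
  rw [div_le_iff₀ (by positivity)] at h
  rw [le_div_iff₀ (by positivity), exp_neg, mul_right_comm, ← div_eq_mul_inv,
    div_le_iff₀ (exp_pos _), ← mul_pow, mul_comm T]
  linarith

theorem exists_pos_forall_le {ι : Type*} [Finite ι] {a : ι → ℝ} (ha : ∀ i, 0 < a i) :
    ∃ ε > 0, ∀ i, ε ≤ a i := by
  obtain ⟨ε, hε⟩ := Finite.exists_ge fun i => (⟨a i, ha i⟩ : Ioi (0 : ℝ))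
  exact ⟨ε, ε.2, hε⟩

variable {ι : Type*} [Fintype ι]

noncomputable def momentIntegrand (j : ℕ) (c x : ι → ℝ) : ℝ :=
  (∑ i, x i) ^ j * (∏ i, √(x i)) * exp (-∑ i, x i * c i)

/-- `laplaceMoment (k - 3) z` is `2 π^{k/2}` times the Laplace transform of `η⁽⁰|k⁾` at `z`. -/
noncomputable def laplaceMoment (j : ℕ) (c : ι → ℝ) : ℝ :=
  ∫ x in univ.pi fun _ : ι => Ioi (0 : ℝ), momentIntegrand j c x

theorem continuous_momentIntegrand (j : ℕ) (c : ι → ℝ) : Continuous (momentIntegrand j c) := by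
  unfold momentIntegrand
  fun_prop

theorem momentIntegrand_zero (c x : ι → ℝ) :
    momentIntegrand 0 c x = ∏ i, √(x i) * exp (-(c i * x i)) := by
  simp only [momentIntegrand, pow_zero, one_mul, prod_mul_distrib, ← exp_sum, ← sum_neg_distrib,
    mul_comm (c _)]

theorem integrableOn_momentIntegrand_zero {c : ι → ℝ} (hc : ∀ i, 0 < c i) :
    IntegrableOn (momentIntegrand 0 c) (univ.pi fun _ : ι => Ioi (0 : ℝ)) := by
  simp only [IntegrableOn, volume_pi, Measure.restrict_pi_pi, funext (momentIntegrand_zero c)]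
  exact Integrable.fintype_prod fun i => integrableOn_sqrt_mul_exp_neg_mul_Ioi (hc i)

theorem laplaceMoment_zero {c : ι → ℝ} (hc : ∀ i, 0 < c i) :
    laplaceMoment 0 c = ∏ i, (√π / 2 * c i ^ (-(3 : ℝ) / 2)) := by
  simp only [laplaceMoment, volume_pi, Measure.restrict_pi_pi, momentIntegrand_zero]
  rw [integral_fintype_prod_eq_prod (fun i t => √t * exp (-(c i * t)))]
  exact prod_congr rfl fun i _ => integral_sqrt_mul_exp_neg_mul_Ioi (hc i)

theorem norm_momentIntegrand_le {ε : ℝ} (hε : 0 < ε) {c : ι → ℝ} (hc : ∀ i, 2 * ε ≤ c i)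
    {x : ι → ℝ} (hx : ∀ i, 0 ≤ x i) (j : ℕ) :
    ‖momentIntegrand j c x‖ ≤ j.factorial / ε ^ j * momentIntegrand 0 (fun _ => ε) x := by
  set T := ∑ i, x i
  have hT : 0 ≤ T := sum_nonneg fun i _ => hx i
  have hsplit : -∑ i, x i * c i ≤ -(ε * T) + -∑ i, x i * ε := by
    have hc' : 2 * ε * T ≤ ∑ i, x i * c i := by
      rw [mul_sum]; exact sum_le_sum fun i _ => by nlinarith [hc i, hx i]
    have hεT : ∑ i, x i * ε = ε * T := by rw [← sum_mul, mul_comm]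
    linarith
  have hP : 0 ≤ ∏ i, √(x i) := prod_nonneg fun i _ => sqrt_nonneg _
  rw [Real.norm_of_nonneg (by unfold momentIntegrand; positivity)]
  calc momentIntegrand j c x
      ≤ T ^ j * (∏ i, √(x i)) * (exp (-(ε * T)) * exp (-∑ i, x i * ε)) := by
        rw [← exp_add]; unfold momentIntegrand; gcongr
    _ = T ^ j * exp (-(ε * T)) * momentIntegrand 0 (fun _ => ε) x := by
        simp only [momentIntegrand, pow_zero, one_mul]; ring
    _ ≤ j.factorial / ε ^ j * momentIntegrand 0 (fun _ => ε) x := by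
        gcongr
        · unfold momentIntegrand; positivity
        · exact pow_mul_exp_neg_mul_le hT hε j

theorem ae_restrict_orthant_nonneg :
    ∀ᵐ x ∂volume.restrict (univ.pi fun _ : ι => Ioi (0 : ℝ)), ∀ i, 0 ≤ x i := by
  refine (ae_restrict_iff' (MeasurableSet.univ_pi fun _ => measurableSet_Ioi)).2 ?_
  filter_upwards with x hx i using (hx i (mem_univ i)).le

theorem integrableOn_momentIntegrand {c : ι → ℝ} (hc : ∀ i, 0 < c i) (j : ℕ) :
    IntegrableOn (momentIntegrand j c) (univ.pi fun _ : ι => Ioi (0 : ℝ)) := by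
  obtain ⟨ε, hε, hεc⟩ := exists_pos_forall_le fun i => half_pos (hc i)
  refine Integrable.mono' ((integrableOn_momentIntegrand_zero fun _ => hε).const_mul
    (j.factorial / ε ^ j)) (continuous_momentIntegrand j c).aestronglyMeasurable ?_
  filter_upwards [ae_restrict_orthant_nonneg] with x hx
  exact norm_momentIntegrand_le hε (fun i => by linarith [hεc i]) hx j

theorem hasDerivAt_momentIntegrand_sub (j : ℕ) (c x : ι → ℝ) (s : ℝ) :
    HasDerivAt (fun t => momentIntegrand j (fun i => c i - t) x)
      (momentIntegrand (j + 1) (fun i => c i - s) x) s := by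
  have hexp : ∀ t, -∑ i, x i * (c i - t) = t * ∑ i, x i + -∑ i, x i * c i := fun t => by
    simp only [mul_sub, sum_sub_distrib, ← sum_mul]; ring
  simp only [momentIntegrand, hexp]
  exact (((hasDerivAt_mul_const (∑ i, x i)).add_const (-∑ i, x i * c i)).exp.const_mul
    ((∑ i, x i) ^ j * ∏ i, √(x i))).congr_deriv (by ring)

theorem hasDerivAt_laplaceMoment_sub (j : ℕ) {c : ι → ℝ} {s : ℝ} (hs : ∀ i, s < c i) :
    HasDerivAt (fun t => laplaceMoment j fun i => c i - t)
      (laplaceMoment (j + 1) fun i => c i - s) s := by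
  obtain ⟨ε, hε, hεc⟩ := exists_pos_forall_le fun i => div_pos (sub_pos.2 (hs i)) three_pos
  have hball : ∀ t ∈ Metric.ball s ε, ∀ i, 2 * ε ≤ c i - t := fun t ht i => by
    have := (abs_lt.1 (Real.dist_eq t s ▸ Metric.mem_ball.1 ht)).2
    linarith [hεc i]
  refine (hasDerivAt_integral_of_dominated_loc_of_deriv_le
    (F := fun t => momentIntegrand j fun i => c i - t)
    (F' := fun t => momentIntegrand (j + 1) fun i => c i - t) (Metric.ball_mem_nhds s hε)
    (.of_forall fun t => (continuous_momentIntegrand j _).aestronglyMeasurable)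
    (integrableOn_momentIntegrand (fun i => sub_pos.2 (hs i)) j)
    (continuous_momentIntegrand (j + 1) _).aestronglyMeasurable ?_
    ((integrableOn_momentIntegrand_zero fun _ => hε).const_mul ((j + 1).factorial / ε ^ (j + 1)))
    (.of_forall fun x t _ => hasDerivAt_momentIntegrand_sub j c x t)).2
  filter_upwards [ae_restrict_orthant_nonneg] with x hx t ht
  exact norm_momentIntegrand_le hε (hball t ht) hx (j + 1)

theorem laplaceMoment_sub_eq_iteratedDeriv (j : ℕ) {c : ι → ℝ} {s : ℝ} (hs : ∀ i, s < c i) :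
    (laplaceMoment j fun i => c i - s) = (√π / 2) ^ Fintype.card ι *
      iteratedDeriv j (fun t => ∏ i, (c i - t) ^ (-(3 : ℝ) / 2)) s := by
  induction j generalizing s with
  | zero =>
    rw [laplaceMoment_zero fun i => sub_pos.2 (hs i), iteratedDeriv_zero, prod_mul_distrib,
      prod_const, card_univ]
  | succ j ih =>
    have hnhds : ∀ᶠ t in 𝓝 s, ∀ i, t < c i := eventually_all.2 fun i => Iio_mem_nhds (hs i)
    calc (laplaceMoment (j + 1) fun i => c i - s)
        = deriv (fun t => laplaceMoment j fun i => c i - t) s :=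
          (hasDerivAt_laplaceMoment_sub j hs).deriv.symm
      _ = deriv (fun t => (√π / 2) ^ Fintype.card ι *
            iteratedDeriv j (fun t => ∏ i, (c i - t) ^ (-(3 : ℝ) / 2)) t) s :=
          Filter.EventuallyEq.deriv_eq (hnhds.mono fun t ht => ih ht)
      _ = _ := by rw [deriv_const_mul_field, iteratedDeriv_succ]

end GaussianKontsevich

theorem laplace_transform_genus_zero_resolvent_general (k : ℕ)
    (z : Fin k → ℝ) (hz : ∀ i, 0 < z i) :
    (∫ x : Fin k → ℝ in Set.univ.pi (fun _ : Fin k => Set.Ioi (0 : ℝ)),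
        (∑ i, x i) ^ (k - 3) * (∏ i, Real.sqrt (x i)) *
          Real.exp (-∑ i, x i * z i)) =
      π ^ ((k : ℝ) / 2) / 2 ^ k *
        iteratedDeriv (k - 3) (fun s : ℝ => ∏ i, (z i - s) ^ (-(3 : ℝ) / 2)) 0 := by
  have h := GaussianKontsevich.laplaceMoment_sub_eq_iteratedDeriv (k - 3) (c := z) (s := 0) hz
  simp only [sub_zero, Fintype.card_fin] at h
  have hC : (√π / 2) ^ k = π ^ ((k : ℝ) / 2) / 2 ^ k := by
    rw [div_pow, sqrt_eq_rpow, ← rpow_natCast, ← rpow_mul pi_pos.le, one_div_mul_eq_div]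
  change GaussianKontsevich.laplaceMoment (k - 3) z = _
  rw [← hC, ← h]

/-- The Laplace-transform identity relating the genus-zero `k`-point resolvents
of the Gaussian Kontsevich model to their Laplace transforms: for `k ≥ 3` and
`z₁, …, z_k > 0`,
`∫_{(0,∞)^k} (Σᵢ xᵢ)^{k−3} · ∏ᵢ √xᵢ · e^{−Σᵢ xᵢzᵢ} dx
  = (π^{k/2}/2^k) · (d/ds)^{k−3} [ ∏ᵢ (zᵢ − s)^{−3/2} ] |_{s=0}`. -/
theorem laplace_transform_genus_zero_resolvent (k : ℕ) (hk : 3 ≤ k)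
    (z : Fin k → ℝ) (hz : ∀ i, 0 < z i) :
    (∫ x : Fin k → ℝ in Set.univ.pi (fun _ : Fin k => Set.Ioi (0 : ℝ)),
        (∑ i, x i) ^ (k - 3) * (∏ i, Real.sqrt (x i)) *
          Real.exp (-∑ i, x i * z i)) =
      π ^ ((k : ℝ) / 2) / 2 ^ k *
        iteratedDeriv (k - 3) (fun s : ℝ => ∏ i, (z i - s) ^ (-(3 : ℝ) / 2)) 0 :=
  laplace_transform_genus_zero_resolvent_general k z hz
end

section
/- Let N ≥ 1 be an integer and set ν = N − 1/2. Define the Chebyshev function of half-integer order T_ν : [−1,∞) → ℝ by T_ν(τ) = cos(ν·arccos τ) for τ ∈ [−1,1] and T_ν(τ) = cosh(ν·arcosh τ) for τ ≥ 1. Then for every real l > 0 the integral converges and l·∫_{−1}^{∞} T_ν(τ)·e^{−τ·l} dτ = (−1)^{N−1} · ν · √(π/(2l)) · e^{l} · Σ_{j=0}^{N−1} (−1)^j · (N−1+j)! / ( j!·(N−1−j)! ) · (2l)^{−j}. -/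
open Real MeasureTheory Finset

/-- The inverse hyperbolic cosine, `arcosh x = log (x + √(x² − 1))`. -/
noncomputable def arcosh (x : ℝ) : ℝ := Real.log (x + Real.sqrt (x ^ 2 - 1))

/-- The Chebyshev function of (half-integer) order `ν` on `[−1,∞)`:
`T_ν(τ) = cos(ν·arccos τ)` for `τ ∈ [−1,1]` and `T_ν(τ) = cosh(ν·arcosh τ)`
for `τ ≥ 1`. -/
noncomputable def chebHalf (ν τ : ℝ) : ℝ :=
  if τ ≤ 1 then Real.cos (ν * Real.arccos τ) else Real.cosh (ν * _root_.arcosh τ)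

/-!
Put `x = √((1 + τ) / 2)`. The half-angle formulas for `cos` (on `[-1, 1]`) and `cosh` (beyond)
give `T_{n+1/2}(τ) = T_{2n+1}(x)` for the Chebyshev polynomial `T_{2n+1}`, which is odd. Its
coefficients follow from the Chebyshev differential equation, which at `0` becomes a two-step
recurrence for the derivatives:
`[x^{2k+1}] T_{2n+1} = (-1)^{n-k} (2n+1) 4^k (n+k)! / ((n-k)! (2k+1)!)`.
The monomial `x^{2k+1} = ((1 + τ) / 2)^{k+1/2}` has a shifted Gamma integral as Laplace transform,
proportional to `Γ(k + 3/2) = (2k+1)‼ √π / 2^{k+1}`, and the `k`-th term of the expansion is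
then exactly the `k`-th term of the Bessel sum.
-/

open Polynomial Polynomial.Chebyshev
open scoped Nat

theorem Finset.sum_range_two_mul {M : Type*} [AddCommMonoid M] (f : ℕ → M) (n : ℕ) :
    ∑ i ∈ range (2 * n), f i = ∑ i ∈ range n, (f (2 * i) + f (2 * i + 1)) := by
  induction n with
  | zero => simp
  | succ n ih =>
    rw [mul_add, mul_one, sum_range_succ, sum_range_succ, sum_range_succ, ih, add_assoc]

theorem Polynomial.iterate_derivative_eval_zero {R : Type*} [CommSemiring R] (p : R[X]) (k : ℕ) :
    (derivative^[k] p).eval 0 = k ! * p.coeff k := by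
  rw [← coeff_zero_eq_eval_zero, coeff_iterate_derivative, zero_add, Nat.descFactorial_self,
    nsmul_eq_mul]

namespace Polynomial.Chebyshev

variable {R : Type*} [CommRing R]

theorem iterate_derivative_two_mul_T_odd_eval_zero (n k : ℕ) :
    (derivative^[2 * k] (T R (2 * n + 1))).eval 0 = 0 := by
  induction k with
  | zero => exact T_eval_zero_of_odd R (odd_two_mul_add_one _)
  | succ k ih =>
    rw [show 2 * (k + 1) = 2 * k + 2 by ring, iterate_derivative_T_eval_zero_recurrence, ih,
      mul_zero]

theorem factorial_mul_iterate_derivative_two_mul_add_one_T_odd_eval_zero (k m : ℕ) :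
    (m ! : R) * (derivative^[2 * k + 1] (T R (2 * (k + m : ℕ) + 1))).eval 0 =
      (-1) ^ m * 4 ^ k * (2 * (k + m) + 1) * (2 * k + m)! := by
  induction k generalizing m with
  | zero =>
    simp only [mul_zero, zero_add, Function.iterate_one, T_derivative_eq_U, add_sub_cancel_right,
      eval_mul, U_eval_two_mul_zero, Int.coe_negOnePow, Int.natAbs_natCast, eval_intCast]
    push_cast
    ring
  | succ k ih =>
    have h := ih (m + 1)
    rw [show k + (m + 1) = k + 1 + m by ring, show 2 * k + (m + 1) = 2 * k + m + 1 by ring,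
      Nat.factorial_succ] at h
    rw [show 2 * (k + 1) + 1 = 2 * k + 1 + 2 by ring, iterate_derivative_T_eval_zero_recurrence,
      show 2 * (k + 1) + m = 2 * k + m + 1 + 1 by ring, Nat.factorial_succ (2 * k + m + 1)]
    push_cast at h ⊢
    linear_combination (-4 * (2 * k + m + 2 : R)) * h

variable {K : Type*} [Field K] [CharZero K]

theorem coeff_two_mul_T_odd (n k : ℕ) : (T K (2 * n + 1)).coeff (2 * k) = 0 := by
  have h := iterate_derivative_two_mul_T_odd_eval_zero (R := K) n k
  rw [iterate_derivative_eval_zero] at h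
  exact (mul_eq_zero.1 h).resolve_left (Nat.cast_ne_zero.2 (Nat.factorial_ne_zero _))

theorem coeff_two_mul_add_one_T_odd (k m : ℕ) :
    (T K (2 * (k + m : ℕ) + 1)).coeff (2 * k + 1) =
      (-1) ^ m * 4 ^ k * (2 * (k + m) + 1) * (2 * k + m)! / (m ! * (2 * k + 1)!) := by
  have h := factorial_mul_iterate_derivative_two_mul_add_one_T_odd_eval_zero (R := K) k m
  rw [iterate_derivative_eval_zero] at h
  have hfac : (m ! * (2 * k + 1)! : K) ≠ 0 := by simp [Nat.factorial_ne_zero]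
  rw [eq_div_iff hfac, ← h]
  ring

theorem eval_T_odd_eq_sum (n : ℕ) (x : K) :
    (T K (2 * n + 1)).eval x =
      ∑ k ∈ range (n + 1), (T K (2 * n + 1)).coeff (2 * k + 1) * x ^ (2 * k + 1) := by
  have hdeg : (T K (2 * n + 1)).natDegree < 2 * (n + 1) := by
    rw [natDegree_T]
    omega
  rw [eval_eq_sum_range' hdeg, sum_range_two_mul]
  simp only [coeff_two_mul_T_odd, zero_mul, zero_add]

end Polynomial.Chebyshev

theorem Real.cosh_half (x : ℝ) : cosh (x / 2) = √((1 + cosh x) / 2) := by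
  have h := cosh_two_mul (x / 2)
  rw [mul_div_cancel₀ x two_ne_zero, sinh_sq] at h
  conv_lhs => rw [← sqrt_sq (cosh_pos (x / 2)).le]
  rw [h]
  congr 1
  ring

theorem chebHalf_eq_eval_T (n : ℕ) {τ : ℝ} (hτ : -1 ≤ τ) :
    chebHalf (n + 1 / 2) τ = (T ℝ (2 * n + 1)).eval √((1 + τ) / 2) := by
  unfold chebHalf
  split_ifs with h
  · have hcos : √((1 + τ) / 2) = cos (arccos τ / 2) := by
      rw [cos_half (by linarith [arccos_nonneg τ, pi_pos]) (by linarith [arccos_le_pi τ]),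
        cos_arccos hτ h]
    rw [hcos, T_real_cos]
    push_cast
    ring_nf
  · have hcosh : √((1 + τ) / 2) = cosh (_root_.arcosh τ / 2) := by
      rw [cosh_half, show _root_.arcosh τ = Real.arcosh τ from rfl, cosh_arcosh (by linarith)]
    rw [hcosh, T_real_cosh]
    push_cast
    ring_nf

section ShiftedGammaIntegral

open Set

variable {a r : ℝ} (c : ℝ)

theorem integrableOn_Ioi_sub_rpow_mul_exp_neg_mul (ha : 0 < a) (hr : 0 < r) :
    IntegrableOn (fun t => (t - c) ^ (a - 1) * exp (-(r * t))) (Ioi c) := by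
  have hg : IntegrableOn (fun s : ℝ => s ^ (a - 1) * exp (-(r * s))) (Ioi 0) := by
    simpa [rpow_one] using integrableOn_rpow_mul_exp_neg_mul_rpow (p := 1) (by linarith) one_pos hr
  have hshift := (measurePreserving_sub_right volume c).integrableOn_comp_preimage
    (measurableEmbedding_subRight c) (f := fun s : ℝ => s ^ (a - 1) * exp (-(r * s)))
    (s := Ioi 0)
  rw [preimage_sub_const_Ioi, zero_add] at hshift
  refine IntegrableOn.congr_fun ((hshift.2 hg).const_mul (exp (-(r * c)))) (fun t _ => ?_)
    measurableSet_Ioi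
  simp only [Function.comp_apply]
  rw [mul_left_comm, ← exp_add]
  ring_nf

theorem integral_Ioi_sub_rpow_mul_exp_neg_mul (ha : 0 < a) (hr : 0 < r) :
    ∫ t in Ioi c, (t - c) ^ (a - 1) * exp (-(r * t)) =
      exp (-(r * c)) * ((1 / r) ^ a * Gamma a) := by
  have hshift := (measurePreserving_sub_right volume c).setIntegral_preimage_emb
    (measurableEmbedding_subRight c) (fun s : ℝ => s ^ (a - 1) * exp (-(r * s))) (Ioi 0)
  rw [preimage_sub_const_Ioi, zero_add, integral_rpow_mul_exp_neg_mul_Ioi ha hr] at hshift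
  rw [← hshift, ← integral_const_mul]
  refine setIntegral_congr_fun measurableSet_Ioi (fun t _ => ?_)
  rw [mul_left_comm, ← exp_add]
  ring_nf

end ShiftedGammaIntegral

theorem Real.sqrt_pow_two_mul_add_one {x : ℝ} (hx : 0 ≤ x) (k : ℕ) :
    √x ^ (2 * k + 1) = x ^ ((k : ℝ) + 1 / 2) := by
  rw [sqrt_eq_rpow, ← rpow_natCast, ← rpow_mul hx]
  push_cast
  ring_nf

theorem sqrt_half_pow_mul_exp_eq_rpow (k : ℕ) {τ : ℝ} (hτ : -1 < τ) (l : ℝ) :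
    √((1 + τ) / 2) ^ (2 * k + 1) * exp (-τ * l) =
      (2 ^ k * √2)⁻¹ * ((τ - -1) ^ ((k : ℝ) + 3 / 2 - 1) * exp (-(l * τ))) := by
  have h2 : √2 ^ (2 * k + 1) = 2 ^ k * √2 := by
    rw [pow_succ, pow_mul, sq_sqrt zero_le_two]
  rw [sqrt_div (by linarith), div_pow, h2, sqrt_pow_two_mul_add_one (by linarith), sub_neg_eq_add,
    add_comm τ, show (k : ℝ) + 3 / 2 - 1 = k + 1 / 2 by ring]
  ring_nf

theorem integrableOn_sqrt_half_pow_mul_exp (k : ℕ) {l : ℝ} (hl : 0 < l) :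
    IntegrableOn (fun τ => √((1 + τ) / 2) ^ (2 * k + 1) * exp (-τ * l)) (Set.Ioi (-1)) :=
  IntegrableOn.congr_fun
    ((integrableOn_Ioi_sub_rpow_mul_exp_neg_mul _ (by positivity) hl).const_mul _)
    (fun _ hτ => (sqrt_half_pow_mul_exp_eq_rpow k hτ l).symm) measurableSet_Ioi

theorem integral_sqrt_half_pow_mul_exp (k : ℕ) {l : ℝ} (hl : 0 < l) :
    ∫ τ in Set.Ioi (-1), √((1 + τ) / 2) ^ (2 * k + 1) * exp (-τ * l) =
      (2 * k + 1)‼ * √(π / (2 * l)) * exp l / (2 * l * (4 * l) ^ k) := by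
  rw [setIntegral_congr_fun measurableSet_Ioi (fun τ hτ => sqrt_half_pow_mul_exp_eq_rpow k hτ l),
    integral_const_mul, integral_Ioi_sub_rpow_mul_exp_neg_mul _ (by positivity) hl,
    show (k : ℝ) + 3 / 2 = k + 1 + 1 / 2 by ring, Gamma_nat_add_one_add_half]
  have hpow : (1 / l) ^ ((k : ℝ) + 1 + 1 / 2) = 1 / (l ^ (k + 1) * √l) := by
    rw [rpow_add (by positivity), ← sqrt_eq_rpow, sqrt_div' _ hl.le, sqrt_one,
      show (k : ℝ) + 1 = (k + 1 : ℕ) by push_cast; ring, rpow_natCast, one_div_pow]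
    field_simp
  have hsqrt : √(π / (2 * l)) = √π / (√2 * √l) := by
    rw [sqrt_div' _ (by positivity), sqrt_mul zero_le_two]
  have h2 : √2 ^ 2 = 2 := sq_sqrt zero_le_two
  have hl' : √l ^ 2 = l := sq_sqrt hl.le
  rw [hpow, hsqrt, mul_neg_one, neg_neg, show (4 : ℝ) * l = 2 * 2 * l by norm_num, mul_pow,
    mul_pow]
  field_simp
  ring

theorem mul_coeff_T_odd_mul_integral_eq_bessel_term (k m : ℕ) {l : ℝ} (hl : 0 < l) :
    l * ((T ℝ (2 * (k + m : ℕ) + 1)).coeff (2 * k + 1) *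
        ∫ τ in Set.Ioi (-1), √((1 + τ) / 2) ^ (2 * k + 1) * exp (-τ * l)) =
      (-1) ^ (k + m) * ((k + m : ℕ) + 1 / 2) * √(π / (2 * l)) * exp l *
        ((-1) ^ k * (2 * k + m)! / (k ! * m !) * (2 * l) ^ (-(k : ℤ))) := by
  rw [integral_sqrt_half_pow_mul_exp k hl, coeff_two_mul_add_one_T_odd,
    Nat.factorial_eq_mul_doubleFactorial, Nat.doubleFactorial_two_mul]
  have hsign : (-1 : ℝ) ^ (k + m) * (-1) ^ k = (-1) ^ m := by
    rw [pow_add, mul_right_comm, ← mul_pow, neg_one_mul, neg_neg, one_pow, one_mul]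
  have hfour : (4 : ℝ) ^ k = 2 ^ k * 2 ^ k := by rw [← mul_pow]; norm_num
  rw [zpow_neg, zpow_natCast, mul_pow, hfour, ← hsign]
  push_cast
  field_simp
  ring

/-- For `ν = N − 1/2` and every `l > 0`, the integral
`∫_{−1}^{∞} T_ν(τ)·e^{−τ·l} dτ` converges, and
`l·∫_{−1}^{∞} T_ν(τ)·e^{−τ·l} dτ
 = (−1)^{N−1}·ν·√(π/(2l))·e^l·Σ_{j=0}^{N−1} (−1)^j·(N−1+j)!/(j!·(N−1−j)!)·(2l)^{−j}`,
the elementary closed form (up to the branch factor `(−1)^{N−1}`) of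
`ν·K_ν(−l)` for the modified Bessel function of half-integer order. -/
theorem chebyshev_laplace_transform_bessel (N : ℕ) (hN : 1 ≤ N) (l : ℝ) (hl : 0 < l) :
    IntegrableOn (fun τ : ℝ => chebHalf ((N : ℝ) - 1 / 2) τ * Real.exp (-τ * l))
        (Set.Ici (-1 : ℝ)) ∧
    l * ∫ τ in Set.Ici (-1 : ℝ), chebHalf ((N : ℝ) - 1 / 2) τ * Real.exp (-τ * l) =
      (-1 : ℝ) ^ (N - 1) * ((N : ℝ) - 1 / 2) * Real.sqrt (π / (2 * l)) * Real.exp l *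
        ∑ j ∈ Finset.range N,
          (-1 : ℝ) ^ j * (Nat.factorial (N - 1 + j) : ℝ) /
              ((Nat.factorial j : ℝ) * (Nat.factorial (N - 1 - j) : ℝ)) *
            (2 * l) ^ (-(j : ℤ)) := by
  obtain ⟨n, rfl⟩ : ∃ n, N = n + 1 := ⟨N - 1, by omega⟩
  have hν : ((n + 1 : ℕ) : ℝ) - 1 / 2 = n + 1 / 2 := by push_cast; ring
  have hexpand : Set.EqOn (fun τ => chebHalf (n + 1 / 2) τ * exp (-τ * l))
      (fun τ => ∑ k ∈ range (n + 1), (T ℝ (2 * n + 1)).coeff (2 * k + 1) *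
        (√((1 + τ) / 2) ^ (2 * k + 1) * exp (-τ * l))) (Set.Ioi (-1)) := by
    intro τ hτ
    simp only [chebHalf_eq_eval_T n (le_of_lt hτ), eval_T_odd_eq_sum, sum_mul, mul_assoc]
  have hint : ∀ k ∈ range (n + 1),
      IntegrableOn (fun τ => (T ℝ (2 * n + 1)).coeff (2 * k + 1) *
        (√((1 + τ) / 2) ^ (2 * k + 1) * exp (-τ * l))) (Set.Ioi (-1)) :=
    fun k _ => (integrableOn_sqrt_half_pow_mul_exp k hl).const_mul _
  rw [hν, integrableOn_Ici_iff_integrableOn_Ioi, integral_Ici_eq_integral_Ioi]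
  refine ⟨IntegrableOn.congr_fun (integrable_finsetSum _ hint) hexpand.symm measurableSet_Ioi,
    ?_⟩
  rw [setIntegral_congr_fun measurableSet_Ioi hexpand, integral_finsetSum _ hint, mul_sum,
    mul_sum, Nat.add_sub_cancel]
  refine sum_congr rfl fun k hk => ?_
  obtain ⟨m, rfl⟩ : ∃ m, n = k + m := ⟨n - k, by rw [mem_range] at hk; omega⟩
  rw [integral_const_mul, Nat.add_sub_cancel_left, show k + m + k = 2 * k + m by ring]
  exact mul_coeff_T_odd_mul_integral_eq_bessel_term k m hl
end

section
/- Let N ≥ 0 be an integer, u ∈ ℝ, and T₁, T₃, …, T_{2N+1} real numbers satisfying the string equation Σ_{k=0}^{N} ((2k+1)!!/k!)·T_{2k+1}·u^k = 0. For −1 ≤ s ≤ N−1 define M_s = Σ_{k=s+1}^{N} T_{2k+1} · (2k+1)!! / ( (2s+1)!!·(k−s−1)! ) · u^{k−s−1} (so that the string equation states M_{−1} = 0). Then for every 0 ≤ k ≤ N: T_{2k+1} = (1/(2k+1)) · Σ_{s=k}^{N} (−1)^{s−k} · M_{s−1} · u^{s−k} · (2s−1)!! / ( (2k−1)!!·(s−k)!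 ). -/
open Finset

/-!
Put `a_k = (2k+1)‼ T_{2k+1}`. Up to the factor `(2s-1)‼`, the moment `M_{s-1}` is the
truncated Taylor shift `(e^{uS} a)_s` of `a`, and the claimed formula is `(e^{-uS} e^{uS} a)_k = a_k`.
The shifts form a one-parameter group because the coefficient of `a_j` in `(e^{xS} e^{yS} a)_k`
is `Σ_s x^{s-k}/(s-k)! · y^{j-s}/(j-s)! = (x+y)^{j-k}/(j-k)!` by the binomial theorem.
-/

/-- The moment `M_{s−1}` of the times of the dispersionless KdV hierarchy
(indices shifted by one so that `kdvMoment N u T s = M_{s-1}`):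
`M_{s−1} = Σ_{k=s}^{N} T_{2k+1}·(2k+1)!!/((2s−1)!!·(k−s)!)·u^{k−s}`.
Here `T k` denotes the time `T_{2k+1}`, `(2m+1)!!` is the double factorial
(with `(−1)!! = 1`, realized by the truncated subtraction `2*0−1 = 0` and
`0‼ = 1`). -/
noncomputable def kdvMoment (N : ℕ) (u : ℝ) (T : ℕ → ℝ) (s : ℕ) : ℝ :=
  ∑ k ∈ Finset.Icc s N,
    T k * (Nat.doubleFactorial (2 * k + 1) : ℝ) /
        ((Nat.doubleFactorial (2 * s - 1) : ℝ) * (Nat.factorial (k - s) : ℝ)) *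
      u ^ (k - s)

open Nat

section ExpShift

variable {K : Type*} [Field K] [CharZero K]

theorem add_pow_div_factorial (x y : K) (n : ℕ) :
    (x + y) ^ n / n ! = ∑ m ∈ range (n + 1), x ^ m / m ! * (y ^ (n - m) / (n - m)!) := by
  rw [add_pow, sum_div]
  refine sum_congr rfl fun m hm => ?_
  rw [Nat.cast_choose K (mem_range_succ_iff.mp hm)]
  have : (n ! : K) ≠ 0 := Nat.cast_ne_zero.mpr n.factorial_ne_zero
  field_simp

theorem sum_Icc_pow_div_factorial_mul (x y : K) {k j : ℕ} (hkj : k ≤ j) :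
    ∑ s ∈ Icc k j, x ^ (s - k) / (s - k)! * (y ^ (j - s) / (j - s)!) =
      (x + y) ^ (j - k) / (j - k)! := by
  rw [add_pow_div_factorial, ← Ico_add_one_right_eq_Icc, sum_Ico_eq_sum_range,
    show j + 1 - k = j - k + 1 by omega]
  refine sum_congr rfl fun t _ => ?_
  rw [Nat.add_sub_cancel_left, Nat.sub_add_eq]

/-- `e^{xS}` for the shift `(S a)_k = a_{k+1}` on sequences indexed by `0, …, N`. -/
def expShift (N : ℕ) (x : K) (a : ℕ → K) (k : ℕ) : K :=
  ∑ j ∈ Icc k N, x ^ (j - k) / (j - k)! * a j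

theorem expShift_zero (N : ℕ) (a : ℕ → K) {k : ℕ} (hk : k ≤ N) : expShift N 0 a k = a k := by
  rw [expShift, sum_eq_single_of_mem k (mem_Icc.mpr ⟨le_rfl, hk⟩)]
  · simp
  · intro j hj hjk
    have : j - k ≠ 0 := by grind
    simp [this]

theorem expShift_expShift (N : ℕ) (x y : K) (a : ℕ → K) (k : ℕ) :
    expShift N x (expShift N y a) k = expShift N (x + y) a k := by
  simp only [expShift, mul_sum]
  rw [sum_comm' (t' := Icc k N) (s' := fun j => Icc k j) (fun s j => by simp only [mem_Icc]; omega)]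
  refine sum_congr rfl fun j hj => ?_
  simp only [← mul_assoc, ← sum_mul]
  rw [sum_Icc_pow_div_factorial_mul x y (mem_Icc.mp hj).1]

end ExpShift

theorem doubleFactorial_mul_kdvMoment (N : ℕ) (u : ℝ) (T : ℕ → ℝ) (s : ℕ) :
    ((2 * s - 1)‼ : ℝ) * kdvMoment N u T s = expShift N u (fun k => T k * (2 * k + 1)‼) s := by
  have hs : ((2 * s - 1)‼ : ℝ) ≠ 0 := Nat.cast_ne_zero.mpr (doubleFactorial_pos _).ne'
  rw [kdvMoment, expShift, mul_sum]
  refine sum_congr rfl fun k _ => ?_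
  field_simp

theorem kdv_times_from_moments_general (N : ℕ) (u : ℝ) (T : ℕ → ℝ) :
    ∀ k ≤ N,
      T k = (1 / (2 * (k : ℝ) + 1)) *
        ∑ s ∈ Finset.Icc k N,
          (-1 : ℝ) ^ (s - k) * kdvMoment N u T s * u ^ (s - k) *
              (Nat.doubleFactorial (2 * s - 1) : ℝ) /
            ((Nat.doubleFactorial (2 * k - 1) : ℝ) * (Nat.factorial (s - k) : ℝ)) := by
  intro k hk
  have hodd : ((2 * k + 1)‼ : ℝ) = (2 * k + 1) * (2 * k - 1)‼ := by
    exact_mod_cast doubleFactorial_add_one (2 * k)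
  have hk0 : ((2 * k + 1)‼ : ℝ) ≠ 0 := Nat.cast_ne_zero.mpr (doubleFactorial_pos _).ne'
  calc T k = expShift N (-u + u) (fun k => T k * (2 * k + 1)‼) k / (2 * k + 1)‼ := by
        rw [neg_add_cancel, expShift_zero N _ hk, mul_div_cancel_right₀ _ hk0]
    _ = _ := by
      rw [← expShift_expShift, expShift, sum_div, mul_sum]
      refine sum_congr rfl fun s _ => ?_
      rw [← doubleFactorial_mul_kdvMoment, neg_pow, hodd]
      field_simp

/-- Inversion of the moment transform of the dispersionless KdV hierarchy: if
the times satisfy the string equation `Σ_{k=0}^{N} ((2k+1)!!/k!)·T_{2k+1}·u^k = 0`,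
then for every `0 ≤ k ≤ N`,
`T_{2k+1} = (1/(2k+1))·Σ_{s=k}^{N} (−1)^{s−k}·M_{s−1}·u^{s−k}·(2s−1)!!/((2k−1)!!·(s−k)!)`. -/
theorem kdv_times_from_moments (N : ℕ) (u : ℝ) (T : ℕ → ℝ)
    (hstring : ∑ k ∈ Finset.range (N + 1),
        ((Nat.doubleFactorial (2 * k + 1) : ℝ) / (Nat.factorial k : ℝ)) * T k * u ^ k = 0) :
    ∀ k ≤ N,
      T k = (1 / (2 * (k : ℝ) + 1)) *
        ∑ s ∈ Finset.Icc k N,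
          (-1 : ℝ) ^ (s - k) * kdvMoment N u T s * u ^ (s - k) *
              (Nat.doubleFactorial (2 * s - 1) : ℝ) /
            ((Nat.doubleFactorial (2 * k - 1) : ℝ) * (Nat.factorial (s - k) : ℝ)) :=
  kdv_times_from_moments_general N u T
end

section
/- Let T₁, c, x, y be real numbers and T₅ ≠ 0. Set T̄₁ = T₁, T̄₅ = −(2/3)·T₅, x̄ = y/(5T₅) and ȳ = (10/3)·T₅·x. Then ȳ² − 25·T̄₅²·x̄³ − 10·T̄₁·T̄₅·x̄ + (20/3)·T₅·c = −(4/(45·T₅)) · ( y³ − 15·T₁T₅·y − 125·T₅³·x² − 75·T₅²·c ). In particular, (x, y) satisfies the (3,2)-model curve y³ − 15T₁T₅y − 125T₅³x² − 75T₅²c = 0 if and only if (x̄, ȳ) satisfies the (2,3)-model curve ȳ² − 25T̄₅²x̄³ − 10T̄₁T̄₅x̄ − 10T̄₅c = 0. -/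
/-! The substitution `x̄ = y/(5T₅)`, `ȳ = (10/3)T₅x`, `T̄₅ = −(2/3)T₅` swaps the roles of `x` and
`y`, and the two curve equations then differ by the constant factor `−4/(45T₅)`; since this factor
is nonzero, the curves are identified. -/

variable {K : Type*} [Field K]

/-- The critical (3,2) spectral curve `y³ + 3Ay + B` with `A = −5T₁T₅`, `B = −125T₅³x² − 75T₅²c`. -/
def spectralCurve32 (T₁ T₅ c x y : K) : K :=
  y ^ 3 - 15 * T₁ * T₅ * y - 125 * T₅ ^ 3 * x ^ 2 - 75 * T₅ ^ 2 * c

def spectralCurve23 (T₁ T₅ c x y : K) : K :=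
  y ^ 2 - 25 * T₅ ^ 2 * x ^ 3 - 10 * T₁ * T₅ * x - 10 * T₅ * c

theorem spectralCurve23_dual_eq [CharZero K] (T₁ T₅ c x y : K) (hT₅ : T₅ ≠ 0) :
    spectralCurve23 T₁ (-(2 / 3) * T₅) c (y / (5 * T₅)) ((10 / 3) * T₅ * x) =
      -(4 / (45 * T₅)) * spectralCurve32 T₁ T₅ c x y := by
  unfold spectralCurve23 spectralCurve32
  field_simp
  ring

theorem spectralCurve32_eq_zero_iff_dual [CharZero K] (T₁ T₅ c x y : K) (hT₅ : T₅ ≠ 0) :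
    spectralCurve32 T₁ T₅ c x y = 0 ↔
      spectralCurve23 T₁ (-(2 / 3) * T₅) c (y / (5 * T₅)) ((10 / 3) * T₅ * x) = 0 := by
  have hfactor : -(4 / (45 * T₅)) ≠ 0 := by simp [hT₅]
  rw [spectralCurve23_dual_eq T₁ T₅ c x y hT₅, mul_eq_zero, or_iff_right hfactor]

/-- The p–q duality isomorphism between the (3,2)- and (2,3)-model spectral
curves at the critical point, as an explicit linear change of coordinates:
with `T̄₁ = T₁`, `T̄₅ = −(2/3)T₅`, `x̄ = y/(5T₅)` and `ȳ = (10/3)T₅x`,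
`ȳ² − 25T̄₅²x̄³ − 10T̄₁T̄₅x̄ + (20/3)T₅c
  = −(4/(45T₅))·(y³ − 15T₁T₅y − 125T₅³x² − 75T₅²c)`;
in particular `(x, y)` lies on the (3,2) curve
`y³ − 15T₁T₅y − 125T₅³x² − 75T₅²c = 0` iff `(x̄, ȳ)` lies on the (2,3) curve
`ȳ² − 25T̄₅²x̄³ − 10T̄₁T̄₅x̄ − 10T̄₅c = 0`. -/
theorem pq_duality_32_23_curves (T₁ c x y T₅ : ℝ) (hT₅ : T₅ ≠ 0) :
    (((10 / 3) * T₅ * x) ^ 2 - 25 * (-(2 / 3) * T₅) ^ 2 * (y / (5 * T₅)) ^ 3 -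
          10 * T₁ * (-(2 / 3) * T₅) * (y / (5 * T₅)) + (20 / 3) * T₅ * c =
        -(4 / (45 * T₅)) *
          (y ^ 3 - 15 * T₁ * T₅ * y - 125 * T₅ ^ 3 * x ^ 2 - 75 * T₅ ^ 2 * c)) ∧
    (y ^ 3 - 15 * T₁ * T₅ * y - 125 * T₅ ^ 3 * x ^ 2 - 75 * T₅ ^ 2 * c = 0 ↔
      ((10 / 3) * T₅ * x) ^ 2 - 25 * (-(2 / 3) * T₅) ^ 2 * (y / (5 * T₅)) ^ 3 -
          10 * T₁ * (-(2 / 3) * T₅) * (y / (5 * T₅)) - 10 * (-(2 / 3) * T₅) * c = 0) := by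
  have hdual := spectralCurve23_dual_eq T₁ T₅ c x y hT₅
  unfold spectralCurve23 spectralCurve32 at hdual
  exact ⟨by linear_combination hdual, spectralCurve32_eq_zero_iff_dual T₁ T₅ c x y hT₅⟩
end
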